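/- arXiv:2604.08691 — 2 statements merged into one kernel-verified Lean document; each statement's English description precedes it below -/
import Mathlib

section
/- Fix integers d ≥ 3, n ≥ d, p ∈ [0,1], δ ∈ (0,1), and a deterministic set T ⊆ [n] with |T| = k₀ ≥ 1. Under the law P_T of the hypergraph planted clique model with planted set T, the statistic q := ⟨u_T, M u_T⟩ satisfies, with probability at least 1 − δ/2: q ≥ s(n,k₀) − (1/k₀)·[ √(2·V(n,k₀)·log(4/δ)) + (2/3)·U_d·log(4/δ) ], where s(n,k₀) := (1−p)(k₀−1)·C(k₀−2,d−2), U_d := (d−1)(d−2), and V(n,k₀) := p(1−p)·Σ_{e ⊄ T} c_e(T)², the sum running over d-element subsets e of [n] not contained in T, with c_e(T) := |e ∩ T|·(|e ∩ T| − 1). -/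
/-!
Outside a null set every hyperedge inside `T` is present. On that event the centred matrix is
`M = ∑ₑ (H_e − p) B_e`, where `B_e` is the co-membership matrix of `e`, and
`⟨u_T, B_e u_T⟩ = c_e(T) / k₀`. The hyperedges inside `T` contribute the signal
`(1 − p) · d(d − 1) · C(k₀, d) = k₀ · s(n, k₀)`. What remains is `k₀⁻¹ ∑_{e ⊄ T} (H_e − p) c_e(T)`,
a sum of independent centred terms bounded by `U_d` whose variances add up to `V(n, k₀)`.
Bernstein's inequality at the level `√(2 V L) + (2/3) U_d L` with `L = log (4/δ)` bounds its lower
tail by `e^{-L} = δ/4`.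
-/

open MeasureTheory Filter Finset Matrix
open scoped ENNReal

namespace HPC

/-- Hyperedges: `d`-element subsets of `[n]`. -/
abbrev Edge (n d : ℕ) : Type := {e : Finset (Fin n) // e.card = d}

/-- A hyperedge configuration. -/
abbrev Config (n d : ℕ) : Type := Edge n d → Bool

instance {n : ℕ} : MeasurableSpace (Finset (Fin n)) := ⊤

/-- Bernoulli measure on `Bool` with success probability `p`. -/
noncomputable def bern (p : ℝ) : Measure Bool :=
  ENNReal.ofReal p • Measure.dirac true + ENNReal.ofReal (1 - p) • Measure.dirac false

/-- Law of the indicator of hyperedge `e` when the planted set is `S`: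
hyperedges inside `S` are present surely, the others with probability `p`. -/
noncomputable def edgeLaw (n d : ℕ) (p : ℝ) (S : Finset (Fin n)) (e : Edge n d) :
    Measure Bool :=
  if (e : Finset (Fin n)) ⊆ S then Measure.dirac true else bern p

/-- Conditional law of the configuration given the planted set `S`. -/
noncomputable def condLaw (n d : ℕ) (p : ℝ) (S : Finset (Fin n)) : Measure (Config n d) :=
  Measure.pi fun e => edgeLaw n d p S e

/-- Marginal law `P_k` of the configuration, the planted set being uniform of size `k`. -/
noncomputable def law (n d : ℕ) (p : ℝ) (k : ℕ) : Measure (Config n d) :=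
  (((univ : Finset (Finset (Fin n))).filter fun S => S.card = k).card : ℝ≥0∞)⁻¹ •
    ∑ S ∈ (univ : Finset (Finset (Fin n))).filter fun S => S.card = k, condLaw n d p S

/-- Joint law of the planted set (uniform of size `k`) and the configuration. -/
noncomputable def jointLaw (n d : ℕ) (p : ℝ) (k : ℕ) :
    Measure (Finset (Fin n) × Config n d) :=
  (((univ : Finset (Finset (Fin n))).filter fun S => S.card = k).card : ℝ≥0∞)⁻¹ •
    ∑ S ∈ (univ : Finset (Finset (Fin n))).filter fun S => S.card = k,
      Measure.map (fun H => (S, H)) (condLaw n d p S)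

/-- Adjacency matrix (pairwise co-occurrence counts) of a configuration. -/
noncomputable def adj (n d : ℕ) (H : Config n d) : Matrix (Fin n) (Fin n) ℝ :=
  Matrix.of fun i j =>
    if i = j then 0 else
      ∑ e : Edge n d,
        if i ∈ (e : Finset (Fin n)) ∧ j ∈ (e : Finset (Fin n)) ∧ H e = true then (1 : ℝ) else 0

/-- Null-model expectation `E₀[A]`. -/
noncomputable def expAdj (n d : ℕ) (p : ℝ) : Matrix (Fin n) (Fin n) ℝ :=
  Matrix.of fun i j => if i = j then 0 else ((n - 2).choose (d - 2) : ℝ) * p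

/-- Centered adjacency matrix `M = A − E₀[A]`. -/
noncomputable def centered (n d : ℕ) (p : ℝ) (H : Config n d) : Matrix (Fin n) (Fin n) ℝ :=
  adj n d H - expAdj n d p

/-- Spectral (ℓ²-operator) norm of a real square matrix. -/
noncomputable def specNorm {n : ℕ} (M : Matrix (Fin n) (Fin n) ℝ) : ℝ :=
  ‖LinearMap.toContinuousLinearMap (Matrix.toEuclideanLin M)‖

/-- Euclidean norm on `Fin n → ℝ`. -/
noncomputable def norm2 {n : ℕ} (v : Fin n → ℝ) : ℝ := Real.sqrt (∑ i, v i ^ 2)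

/-- Supremum norm on `Fin n → ℝ`. -/
noncomputable def normInf {n : ℕ} (v : Fin n → ℝ) : ℝ := ‖v‖

/-- Two-to-infinity norm: maximal Euclidean row norm. -/
noncomputable def norm2toInf {n : ℕ} (M : Matrix (Fin n) (Fin n) ℝ) : ℝ :=
  normInf fun i => norm2 (M i)

/-- `u` is a unit eigenvector of `M` for the eigenvalue `lam`, and `lam` is the
largest eigenvalue of `M`. -/
def IsTopEigenpair {n : ℕ} (M : Matrix (Fin n) (Fin n) ℝ) (lam : ℝ) (u : Fin n → ℝ) : Prop :=
  norm2 u = 1 ∧ M.mulVec u = lam • u ∧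
    ∀ (mu : ℝ) (v : Fin n → ℝ), v ≠ 0 → M.mulVec v = mu • v → mu ≤ lam

/-- `T` is a set of indices of `k` largest entries of `|u|` (ties broken arbitrarily). -/
def IsTopK {n : ℕ} (k : ℕ) (u : Fin n → ℝ) (T : Finset (Fin n)) : Prop :=
  T.card = k ∧ ∀ i ∈ T, ∀ j ∉ T, |u j| ≤ |u i|

/-- Normalized indicator vector `1_T / √|T|`. -/
noncomputable def uInd {n : ℕ} (T : Finset (Fin n)) : Fin n → ℝ :=
  fun i => if i ∈ T then (Real.sqrt T.card)⁻¹ else 0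

/-- Normalized indicator vector `1_S / √k`. -/
noncomputable def uStar {n : ℕ} (k : ℕ) (S : Finset (Fin n)) : Fin n → ℝ :=
  fun i => if i ∈ S then (Real.sqrt k)⁻¹ else 0

/-- `c_e(T) = |e ∩ T|·(|e ∩ T| − 1)`. -/
noncomputable def cE {n : ℕ} (e T : Finset (Fin n)) : ℝ :=
  ((e ∩ T).card : ℝ) * (((e ∩ T).card : ℝ) - 1)

/-- Co-membership matrix of a hyperedge. -/
noncomputable def coB {n : ℕ} (e : Finset (Fin n)) : Matrix (Fin n) (Fin n) ℝ :=
  Matrix.of fun i j => if i ≠ j ∧ i ∈ e ∧ j ∈ e then 1 else 0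

/-- `λ* = (1 − p)(k − 1)·C(k−2, d−2)`. -/
noncomputable def lamStar (d k : ℕ) (p : ℝ) : ℝ :=
  (1 - p) * ((k : ℝ) - 1) * ((k - 2).choose (d - 2) : ℝ)

noncomputable def wIn (n d k : ℕ) (p : ℝ) : ℝ :=
  ((k - 2).choose (d - 2) : ℝ) +
    p * (((n - 2).choose (d - 2) : ℝ) - ((k - 2).choose (d - 2) : ℝ))

noncomputable def wOut (n d : ℕ) (p : ℝ) : ℝ := p * ((n - 2).choose (d - 2) : ℝ)

/-- `M* = (w_in − w_out)·(1_S 1_Sᵀ − I_S)`, the conditional expectation `E_S[M]`. -/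
noncomputable def mStarOf (n d k : ℕ) (p : ℝ) (S : Finset (Fin n)) :
    Matrix (Fin n) (Fin n) ℝ :=
  Matrix.of fun i j =>
    (wIn n d k p - wOut n d p) *
      ((if i ∈ S then (1 : ℝ) else 0) * (if j ∈ S then 1 else 0) -
        if i = j ∧ i ∈ S then 1 else 0)

/-- Leave-one-out perturbation `B^{(m)} = Σ_{e ∋ m} (H_e − p)·B_e`. -/
noncomputable def bMat (n d : ℕ) (p : ℝ) (H : Config n d) (m : Fin n) :
    Matrix (Fin n) (Fin n) ℝ :=
  ∑ e : Edge n d,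
    if m ∈ (e : Finset (Fin n)) then
      ((if H e then (1 : ℝ) else 0) - p) • coB (e : Finset (Fin n))
    else 0

/-- `(lam, U)` is an orthonormal eigendecomposition of `A` with eigenvalues listed in
nonincreasing order. -/
def IsEigenDecomp {n : ℕ} (A : Matrix (Fin n) (Fin n) ℝ) (lam : Fin n → ℝ)
    (U : Fin n → Fin n → ℝ) : Prop :=
  (∀ i j, U i ⬝ᵥ U j = if i = j then (1 : ℝ) else 0) ∧
    (∀ i, A.mulVec (U i) = lam i • U i) ∧ Antitone lam

/-- Maximum of a real function over `Fin n`, `n > 0`. -/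
noncomputable def maxOver {n : ℕ} (hn : 0 < n) (f : Fin n → ℝ) : ℝ :=
  (univ : Finset (Fin n)).sup' ⟨⟨0, hn⟩, Finset.mem_univ _⟩ f

/-- `min_{i ≥ 2} |lam i − x|`, the minimum over non-leading indices. -/
noncomputable def minOffTop {n : ℕ} [NeZero n] (hn : 2 ≤ n) (lam : Fin n → ℝ) (x : ℝ) : ℝ :=
  ((univ : Finset (Fin n)).filter fun i => i ≠ 0).inf'
    ⟨⟨1, by omega⟩, by
      simp only [Finset.mem_filter, Finset.mem_univ, true_and, ne_eq]
      intro h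
      simpa using congrArg Fin.val h⟩
    fun i => |lam i - x|

end HPC

open HPC MeasureTheory Filter Finset Matrix
open scoped ENNReal Topology

open ProbabilityTheory Real

namespace Real

theorem exp_le_one_add_add_sq_div {x c : ℝ} (hxc : |x| ≤ c) (hc : c < 3) :
    exp x ≤ 1 + x + x ^ 2 / (2 * (1 - c / 3)) := by
  have hr0 : 0 ≤ |x| / 3 := by positivity
  have hr1 : |x| / 3 < 1 := by linarith
  have htail : HasSum (fun n : ℕ => x ^ (n + 2) / (n + 2).factorial) (exp x - (1 + x)) := by
    have := (hasSum_nat_add_iff' 2).2 (exp_eq_exp_ℝ ▸ NormedSpace.expSeries_div_hasSum_exp x)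
    simpa [Finset.sum_range_succ] using this
  have hgeom : HasSum (fun n : ℕ => x ^ 2 / 2 * (|x| / 3) ^ n) (x ^ 2 / 2 * (1 - |x| / 3)⁻¹) :=
    (hasSum_geometric_of_lt_one hr0 hr1).mul_left _
  have hterm (n : ℕ) : x ^ (n + 2) / (n + 2).factorial ≤ x ^ 2 / 2 * (|x| / 3) ^ n := by
    have hfact : ((2 * 3 ^ n : ℕ) : ℝ) ≤ (n + 2).factorial := by
      have := @Nat.factorial_mul_pow_le_factorial 2 n
      rw [add_comm 2 n] at this
      exact_mod_cast this
    push_cast at hfact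
    calc x ^ (n + 2) / (n + 2).factorial ≤ |x| ^ (n + 2) / (n + 2).factorial :=
          div_le_div_of_nonneg_right ((le_abs_self _).trans (abs_pow x _).le) (by positivity)
      _ ≤ |x| ^ (n + 2) / (2 * 3 ^ n) := by gcongr
      _ = x ^ 2 / 2 * (|x| / 3) ^ n := by rw [pow_add, sq_abs, div_pow]; ring
  have hle := hasSum_le hterm htail hgeom
  have hmono : (1 - |x| / 3)⁻¹ ≤ (1 - c / 3)⁻¹ := by
    gcongr
    linarith
  calc exp x ≤ 1 + x + x ^ 2 / 2 * (1 - |x| / 3)⁻¹ := by linarith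
    _ ≤ 1 + x + x ^ 2 / 2 * (1 - c / 3)⁻¹ := by gcongr
    _ = 1 + x + x ^ 2 / (2 * (1 - c / 3)) := by rw [div_eq_mul_inv _ (2 * _), mul_inv]; ring

lemma le_sq_div_of_eq_sqrt_add {v b L t : ℝ} (hv : 0 ≤ v) (hb : 0 < b) (hL : 0 < L)
    (ht : t = √(2 * v * L) + 2 / 3 * b * L) : L ≤ t ^ 2 / (2 * (v + b * t / 3)) := by
  have hσ := sq_sqrt (show 0 ≤ 2 * v * L by positivity)
  have hσ0 := sqrt_nonneg (2 * v * L)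
  have ht0 : 0 < t := by rw [ht]; positivity
  rw [le_div_iff₀ (by positivity), ht]
  nlinarith [mul_nonneg (mul_nonneg hb.le hL.le) hσ0]

end Real

namespace ProbabilityTheory

variable {Ω : Type*} [MeasurableSpace Ω] {μ : Measure Ω} {b t : ℝ}

lemma mgf_le_exp_of_abs_le [IsProbabilityMeasure μ] {X : Ω → ℝ} (hX : AEMeasurable X μ)
    (hb : ∀ ω, |X ω| ≤ b) (hmean : μ[X] = 0) (ht : 0 ≤ t) (htb : t * b < 3) :
    mgf X μ t ≤ exp (t ^ 2 * (∫ ω, X ω ^ 2 ∂μ) / (2 * (1 - t * b / 3))) := by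
  have hpt (ω : Ω) : exp (t * X ω) ≤ 1 + t * X ω + t ^ 2 * X ω ^ 2 / (2 * (1 - t * b / 3)) := by
    have := exp_le_one_add_add_sq_div (x := t * X ω) (c := t * b)
      (by rw [abs_mul, abs_of_nonneg ht]; exact mul_le_mul_of_nonneg_left (hb ω) ht) htb
    rwa [mul_pow] at this
  have hXint : Integrable X μ := .of_bound hX.aestronglyMeasurable b (.of_forall hb)
  have hX2int : Integrable (fun ω => X ω ^ 2) μ :=
    .of_bound (hX.pow_const 2).aestronglyMeasurable (b ^ 2) <| .of_forall fun ω => by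
      rw [norm_eq_abs, abs_pow]
      exact pow_le_pow_left₀ (abs_nonneg _) (hb ω) 2
  have hlin : Integrable (fun ω => 1 + t * X ω) μ := (integrable_const 1).add (hXint.const_mul t)
  have hquad : Integrable (fun ω => t ^ 2 * X ω ^ 2 / (2 * (1 - t * b / 3))) μ :=
    (hX2int.const_mul _).div_const _
  calc mgf X μ t ≤ ∫ ω, 1 + t * X ω + t ^ 2 * X ω ^ 2 / (2 * (1 - t * b / 3)) ∂μ :=
        integral_mono (integrable_exp_mul_of_le t b ht hX
          (.of_forall fun ω => (le_abs_self _).trans (hb ω))) (hlin.add hquad) hpt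
    _ = 1 + t ^ 2 * (∫ ω, X ω ^ 2 ∂μ) / (2 * (1 - t * b / 3)) := by
        rw [integral_add hlin hquad, integral_add (integrable_const 1) (hXint.const_mul t),
          integral_const_mul, hmean, integral_div, integral_const_mul]
        simp
    _ ≤ exp (t ^ 2 * (∫ ω, X ω ^ 2 ∂μ) / (2 * (1 - t * b / 3))) := by
        linarith [add_one_le_exp (t ^ 2 * (∫ ω, X ω ^ 2 ∂μ) / (2 * (1 - t * b / 3)))]

variable {ι : Type*} {X : ι → Ω → ℝ} {s : Finset ι} {v : ℝ}

lemma measureReal_sum_ge_le_bernstein_of_pos (hind : iIndepFun X μ)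
    (hmeas : ∀ i, Measurable (X i)) (hb : ∀ i ∈ s, ∀ ω, |X i ω| ≤ b)
    (hmean : ∀ i ∈ s, μ[X i] = 0) (hv : ∑ i ∈ s, ∫ ω, X i ω ^ 2 ∂μ ≤ v) (hv0 : 0 < v)
    (hb0 : 0 ≤ b) (ht : 0 ≤ t) :
    μ.real {ω | t ≤ ∑ i ∈ s, X i ω} ≤ exp (-t ^ 2 / (2 * (v + b * t / 3))) := by
  have := hind.isProbabilityMeasure
  set D := v + b * t / 3 with hD
  have hD0 : 0 < D := by positivity
  set lam := t / D with hlam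
  have hlam0 : 0 ≤ lam := by positivity
  have hslack : 1 - lam * b / 3 = v / D := by
    rw [hlam, hD]; field_simp; ring
  have hlamb : lam * b < 3 := by
    have : 0 < v / D := by positivity
    linarith
  have hmgf (i) (hi : i ∈ s) : mgf (X i) μ lam ≤
      exp (lam ^ 2 * (∫ ω, X i ω ^ 2 ∂μ) / (2 * (1 - lam * b / 3))) :=
    mgf_le_exp_of_abs_le (hmeas i).aemeasurable (hb i hi) (hmean i hi) hlam0 hlamb
  have hint : Integrable (fun ω => exp (lam * (∑ i ∈ s, X i) ω)) μ :=
    hind.integrable_exp_mul_sum hmeas fun i hi => integrable_exp_mul_of_le lam b hlam0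
      (hmeas i).aemeasurable (.of_forall fun ω => (le_abs_self _).trans (hb i hi ω))
  calc μ.real {ω | t ≤ ∑ i ∈ s, X i ω}
      ≤ exp (-lam * t) * mgf (∑ i ∈ s, X i) μ lam := by
        simpa only [Finset.sum_apply] using measure_ge_le_exp_mul_mgf t hlam0 hint
    _ ≤ exp (-lam * t) * exp (lam ^ 2 * v / (2 * (1 - lam * b / 3))) := by
        rw [hind.mgf_sum hmeas]
        gcongr
        calc ∏ i ∈ s, mgf (X i) μ lam
            ≤ ∏ i ∈ s, exp (lam ^ 2 * (∫ ω, X i ω ^ 2 ∂μ) / (2 * (1 - lam * b / 3))) :=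
              Finset.prod_le_prod (fun i _ => mgf_nonneg) hmgf
          _ ≤ exp (lam ^ 2 * v / (2 * (1 - lam * b / 3))) := by
              rw [← exp_sum, ← Finset.sum_div, ← Finset.mul_sum]
              gcongr
              linarith
    _ = exp (-t ^ 2 / (2 * D)) := by
        rw [← exp_add, hslack, hlam]
        congr 1
        field_simp
        ring

theorem measureReal_sum_ge_le_bernstein (hind : iIndepFun X μ)
    (hmeas : ∀ i, Measurable (X i)) (hb : ∀ i ∈ s, ∀ ω, |X i ω| ≤ b)
    (hmean : ∀ i ∈ s, μ[X i] = 0) (hv : ∑ i ∈ s, ∫ ω, X i ω ^ 2 ∂μ ≤ v)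
    (hb0 : 0 < b) (ht : 0 < t) :
    μ.real {ω | t ≤ ∑ i ∈ s, X i ω} ≤ exp (-t ^ 2 / (2 * (v + b * t / 3))) := by
  have hv0 : 0 ≤ v := (Finset.sum_nonneg fun i _ => integral_nonneg fun ω => sq_nonneg _).trans hv
  have hcont : ContinuousAt (fun w => exp (-t ^ 2 / (2 * (w + b * t / 3)))) v := by
    have : 2 * (v + b * t / 3) ≠ 0 := by positivity
    fun_prop (disch := assumption)
  -- For `v = 0` the optimal exponent `λ = 3 / b` lies on the boundary of the range where
  -- `mgf_le_exp_of_abs_le` applies, so that case is reached by letting `v` decrease.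
  refine ge_of_tendsto (tendsto_nhdsWithin_of_tendsto_nhds (s := Set.Ioi v) hcont.tendsto)
    (eventually_nhdsWithin_of_forall fun w (hw : v < w) =>
      measureReal_sum_ge_le_bernstein_of_pos hind hmeas hb hmean (hv.trans hw.le)
        (hv0.trans_lt hw) hb0.le ht.le)

theorem measureReal_sum_ge_sqrt_add_le_exp_neg (hind : iIndepFun X μ)
    (hmeas : ∀ i, Measurable (X i)) (hb : ∀ i ∈ s, ∀ ω, |X i ω| ≤ b)
    (hmean : ∀ i ∈ s, μ[X i] = 0) (hv : ∑ i ∈ s, ∫ ω, X i ω ^ 2 ∂μ ≤ v)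
    (hb0 : 0 < b) {L : ℝ} (hL : 0 < L) :
    μ.real {ω | √(2 * v * L) + 2 / 3 * b * L ≤ ∑ i ∈ s, X i ω} ≤ exp (-L) := by
  have hv0 : 0 ≤ v := (Finset.sum_nonneg fun i _ => integral_nonneg fun ω => sq_nonneg _).trans hv
  refine (measureReal_sum_ge_le_bernstein hind hmeas hb hmean hv hb0 (by positivity)).trans ?_
  rw [exp_le_exp, neg_div, neg_le_neg_iff]
  exact le_sq_div_of_eq_sqrt_add hv0 hb0 hL rfl

end ProbabilityTheory

namespace HPC

variable {n d : ℕ}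

lemma sum_edge {β : Type*} [AddCommMonoid β] (f : Finset (Fin n) → β) :
    ∑ e : Edge n d, f e = ∑ e ∈ univ.powersetCard d, f e :=
  (Finset.sum_subtype _ (fun _ => mem_powersetCard_univ) f).symm

lemma sum_edge_filter {β : Type*} [AddCommMonoid β] (P : Finset (Fin n) → Prop) [DecidablePred P]
    (f : Finset (Fin n) → β) :
    ∑ e : Edge n d with P e.1, f e = ∑ e ∈ (univ.powersetCard d).filter P, f e := by
  rw [Finset.sum_filter, Finset.sum_filter, sum_edge (fun e => if P e then f e else 0)]

lemma dotProduct_mulVec_uInd (T : Finset (Fin n)) (M : Matrix (Fin n) (Fin n) ℝ) :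
    uInd T ⬝ᵥ M *ᵥ uInd T = (T.card : ℝ)⁻¹ * ∑ i ∈ T, ∑ j ∈ T, M i j := by
  have hsq : (T.card : ℝ)⁻¹ = (√T.card)⁻¹ * (√T.card)⁻¹ := by
    rw [← mul_inv, mul_self_sqrt (Nat.cast_nonneg _)]
  simp only [dotProduct, mulVec, uInd, mul_ite, mul_zero, ite_mul, zero_mul,
    Finset.sum_ite_mem, Finset.univ_inter]
  rw [hsq, Finset.mul_sum]
  exact Finset.sum_congr rfl fun i _ => by rw [← Finset.sum_mul]; ring

lemma sum_sum_coB (e T : Finset (Fin n)) : ∑ i ∈ T, ∑ j ∈ T, coB e i j = cE e T := by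
  have hoff : (T ×ˢ T).filter (fun x => x.1 ≠ x.2 ∧ x.1 ∈ e ∧ x.2 ∈ e) = (e ∩ T).offDiag := by
    ext ⟨i, j⟩
    simp only [Finset.mem_filter, Finset.mem_product, Finset.mem_offDiag, Finset.mem_inter]
    tauto
  rw [← Finset.sum_product' (f := fun i j => coB e i j)]
  simp only [coB, Matrix.of_apply]
  rw [Finset.sum_boole, hoff, Finset.offDiag_card, cE,
    Nat.cast_sub (Nat.le_mul_self _), Nat.cast_mul]
  ring

lemma sum_coB_apply (hd : 2 ≤ d) (i j : Fin n) :
    ∑ e : Edge n d, coB (e : Finset (Fin n)) i j =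
      if i = j then 0 else ((n - 2).choose (d - 2) : ℝ) := by
  split_ifs with hij
  · simp [coB, hij]
  have hpair : ({i, j} : Finset (Fin n)).card = 2 := Finset.card_pair hij
  have hcount := Finset.card_filter_powersetCard_subset {i, j} univ d (subset_univ _)
    (hpair ▸ hd)
  rw [hpair, Finset.card_univ, Fintype.card_fin] at hcount
  rw [sum_edge (fun e => coB e i j), ← hcount]
  simp only [coB, Matrix.of_apply, ne_eq, hij, not_false_eq_true, true_and]
  rw [Finset.sum_boole]
  congr 3
  ext e
  simp [Finset.insert_subset_iff]

lemma adj_eq_sum_smul_coB (H : Config n d) :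
    adj n d H = ∑ e : Edge n d, (if H e then (1 : ℝ) else 0) • coB (e : Finset (Fin n)) := by
  ext i j
  simp only [adj, coB, Matrix.of_apply, Matrix.sum_apply, Matrix.smul_apply, smul_eq_mul]
  split_ifs with hij
  · simp [hij]
  · refine Finset.sum_congr rfl fun e _ => ?_
    by_cases he : H e <;> simp [he, hij]

lemma expAdj_eq_smul_sum_coB (hd : 2 ≤ d) (p : ℝ) :
    expAdj n d p = p • ∑ e : Edge n d, coB (e : Finset (Fin n)) := by
  ext i j
  rw [Matrix.smul_apply, Matrix.sum_apply, sum_coB_apply hd, expAdj, Matrix.of_apply]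
  split_ifs <;> simp [mul_comm]

lemma centered_eq_sum_smul_coB (hd : 2 ≤ d) (p : ℝ) (H : Config n d) :
    centered n d p H =
      ∑ e : Edge n d, ((if H e then (1 : ℝ) else 0) - p) • coB (e : Finset (Fin n)) := by
  simp only [centered, adj_eq_sum_smul_coB, expAdj_eq_smul_sum_coB hd, Finset.smul_sum,
    ← Finset.sum_sub_distrib, sub_smul]

lemma dotProduct_centered_mulVec_uInd (hd : 2 ≤ d) (p : ℝ) (H : Config n d)
    (T : Finset (Fin n)) :
    uInd T ⬝ᵥ centered n d p H *ᵥ uInd T =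
      (T.card : ℝ)⁻¹ * ∑ e : Edge n d, ((if H e then (1 : ℝ) else 0) - p) *
        cE (e : Finset (Fin n)) T := by
  simp only [dotProduct_mulVec_uInd, centered_eq_sum_smul_coB hd, Matrix.sum_apply,
    Matrix.smul_apply, smul_eq_mul, ← sum_sum_coB _ T, Finset.mul_sum]
  symm
  rw [Finset.sum_comm]
  exact Finset.sum_congr rfl fun i _ => Finset.sum_comm

noncomputable def fluctuation (n d : ℕ) (p : ℝ) (T : Finset (Fin n)) (H : Config n d) : ℝ :=
  ∑ e : Edge n d with ¬ e.1 ⊆ T, (p - if H e then 1 else 0) * cE e T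

lemma cast_choose_mul_mul_sub_one (hd : 2 ≤ d) (m : ℕ) :
    (m.choose d : ℝ) * (d * (d - 1)) = m * (m - 1) * ((m - 2).choose (d - 2) : ℝ) := by
  have h := congrArg (Nat.cast (R := ℝ)) (Nat.choose_mul (n := m) hd)
  push_cast [Nat.cast_choose_two] at h
  linear_combination 2 * h

lemma sum_powersetCard_cE (hd : 2 ≤ d) (T : Finset (Fin n)) :
    ∑ e ∈ T.powersetCard d, cE e T =
      T.card * (T.card - 1) * ((T.card - 2).choose (d - 2) : ℝ) := by
  have hconst : ∀ e ∈ T.powersetCard d, cE e T = d * (d - 1) := fun e he => by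
    rw [Finset.mem_powersetCard] at he
    rw [cE, Finset.inter_eq_left.2 he.1, he.2]
  rw [Finset.sum_congr rfl hconst, Finset.sum_const, Finset.card_powersetCard, nsmul_eq_mul,
    cast_choose_mul_mul_sub_one hd]

lemma dotProduct_centered_mulVec_uInd_of_planted (hd : 2 ≤ d) (p : ℝ) (H : Config n d)
    {T : Finset (Fin n)} (hT : 0 < T.card)
    (hH : ∀ e : Edge n d, (e : Finset (Fin n)) ⊆ T → H e = true) :
    uInd T ⬝ᵥ centered n d p H *ᵥ uInd T =
      (1 - p) * ((T.card : ℝ) - 1) * ((T.card - 2).choose (d - 2) : ℝ) -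
        (T.card : ℝ)⁻¹ * fluctuation n d p T H := by
  have hplanted : ∑ e : Edge n d with e.1 ⊆ T,
      ((if H e then (1 : ℝ) else 0) - p) * cE (e : Finset (Fin n)) T =
        (1 - p) * (T.card * (T.card - 1) * ((T.card - 2).choose (d - 2) : ℝ)) := by
    have hsub : (univ.powersetCard d).filter (· ⊆ T) = T.powersetCard d := by
      ext e
      simp [mem_powersetCard, and_comm]
    rw [← sum_powersetCard_cE hd, Finset.mul_sum, ← hsub, ← sum_edge_filter (· ⊆ T)]
    exact Finset.sum_congr rfl fun e he => by simp [hH e (Finset.mem_filter.1 he).2]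
  have hfluct : ∑ e : Edge n d with ¬ e.1 ⊆ T,
      ((if H e then (1 : ℝ) else 0) - p) * cE (e : Finset (Fin n)) T = -fluctuation n d p T H := by
    simp only [fluctuation, ← Finset.sum_neg_distrib, ← neg_mul, neg_sub]
  have hk : (T.card : ℝ) ≠ 0 := by positivity
  rw [dotProduct_centered_mulVec_uInd hd, ← Finset.sum_filter_add_sum_filter_not _
    (fun e : Edge n d => (e : Finset (Fin n)) ⊆ T), hplanted, hfluct]
  field_simp
  ring

lemma cE_nonneg (e T : Finset (Fin n)) : 0 ≤ cE e T := by
  rw [cE]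
  rcases Nat.eq_zero_or_pos (e ∩ T).card with h0 | h1
  · simp [h0]
  · have : (1 : ℝ) ≤ (e ∩ T).card := by exact_mod_cast h1
    nlinarith

lemma cE_le_of_not_subset (hd : 2 ≤ d) {e : Finset (Fin n)} (he : e.card = d)
    {T : Finset (Fin n)} (heT : ¬ e ⊆ T) : cE e T ≤ ((d : ℝ) - 1) * ((d : ℝ) - 2) := by
  have hlt : (e ∩ T).card < d := he ▸ Finset.card_lt_card
    (Finset.inter_subset_left.ssubset_of_ne fun h => heT (h ▸ Finset.inter_subset_right))
  have hm : ((e ∩ T).card : ℝ) + 1 ≤ d := by exact_mod_cast hlt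
  have hd' : (2 : ℝ) ≤ d := by exact_mod_cast hd
  rw [cE]
  rcases Nat.eq_zero_or_pos (e ∩ T).card with h0 | h1
  · rw [h0, Nat.cast_zero]; nlinarith
  · have : (1 : ℝ) ≤ (e ∩ T).card := by exact_mod_cast h1
    nlinarith

variable {p : ℝ}

lemma isProbabilityMeasure_bern (hp : p ∈ Set.Icc (0 : ℝ) 1) : IsProbabilityMeasure (bern p) := by
  constructor
  simp only [bern, Measure.add_apply, Measure.smul_apply, measure_univ, smul_eq_mul, mul_one]
  rw [← ENNReal.ofReal_add hp.1 (by linarith [hp.2])]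
  norm_num

lemma isProbabilityMeasure_edgeLaw (hp : p ∈ Set.Icc (0 : ℝ) 1) (T : Finset (Fin n))
    (e : Edge n d) : IsProbabilityMeasure (edgeLaw n d p T e) := by
  unfold edgeLaw
  split
  · infer_instance
  · exact isProbabilityMeasure_bern hp

lemma isProbabilityMeasure_condLaw (hp : p ∈ Set.Icc (0 : ℝ) 1) (T : Finset (Fin n)) :
    IsProbabilityMeasure (condLaw n d p T) :=
  have : ∀ e, IsProbabilityMeasure (edgeLaw n d p T e) := isProbabilityMeasure_edgeLaw hp T
  inferInstanceAs (IsProbabilityMeasure (Measure.pi _))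

lemma integral_bern (hp : p ∈ Set.Icc (0 : ℝ) 1) (f : Bool → ℝ) :
    ∫ b, f b ∂bern p = p * f true + (1 - p) * f false := by
  rw [bern, integral_add_measure (Integrable.of_finite.smul_measure ENNReal.ofReal_ne_top)
    (Integrable.of_finite.smul_measure ENNReal.ofReal_ne_top), integral_smul_measure,
    integral_smul_measure, integral_dirac, integral_dirac, ENNReal.toReal_ofReal hp.1,
    ENNReal.toReal_ofReal (by linarith [hp.2]), smul_eq_mul, smul_eq_mul]

lemma integral_condLaw_apply (hp : p ∈ Set.Icc (0 : ℝ) 1) (T : Finset (Fin n)) (e : Edge n d)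
    (f : Bool → ℝ) : ∫ H, f (H e) ∂condLaw n d p T = ∫ b, f b ∂edgeLaw n d p T e :=
  have : ∀ e, IsProbabilityMeasure (edgeLaw n d p T e) := isProbabilityMeasure_edgeLaw hp T
  integral_comp_eval (Measurable.of_discrete.aestronglyMeasurable)

lemma iIndepFun_condLaw (hp : p ∈ Set.Icc (0 : ℝ) 1) (T : Finset (Fin n))
    (f : Edge n d → Bool → ℝ) : iIndepFun (fun e H => f e (H e)) (condLaw n d p T) :=
  have : ∀ e, IsProbabilityMeasure (edgeLaw n d p T e) := isProbabilityMeasure_edgeLaw hp T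
  iIndepFun_pi fun _ => Measurable.of_discrete.aemeasurable

lemma ae_condLaw_eq_true_of_subset (hp : p ∈ Set.Icc (0 : ℝ) 1) (T : Finset (Fin n)) :
    ∀ᵐ H ∂condLaw n d p T, ∀ e : Edge n d, (e : Finset (Fin n)) ⊆ T → H e = true := by
  have : ∀ e, IsProbabilityMeasure (edgeLaw n d p T e) := isProbabilityMeasure_edgeLaw hp T
  refine ae_all_iff.2 fun e => ?_
  by_cases he : (e : Finset (Fin n)) ⊆ T
  · have hnull : condLaw n d p T (Function.eval e ⁻¹' {false}) = 0 :=
      Measure.pi_eval_preimage_null _ (by simp [edgeLaw, he])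
    filter_upwards [measure_eq_zero_iff_ae_notMem.1 hnull] with H hH _
    simpa using hH
  · exact .of_forall fun H h => absurd h he

lemma measureReal_condLaw_fluctuation_ge_le (hd : 3 ≤ d) (hp : p ∈ Set.Icc (0 : ℝ) 1)
    (T : Finset (Fin n)) {L : ℝ} (hL : 0 < L) :
    (condLaw n d p T).real {H |
        √(2 * (p * (1 - p) * ∑ e ∈ (univ : Finset (Finset (Fin n))).filter
            (fun e => e.card = d ∧ ¬ e ⊆ T), cE e T ^ 2) * L) +
          2 / 3 * (((d : ℝ) - 1) * ((d : ℝ) - 2)) * L ≤ fluctuation n d p T H} ≤ exp (-L) := by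
  have hd' : (3 : ℝ) ≤ d := by exact_mod_cast hd
  have hbern (e : Edge n d) (he : e ∈ univ.filter fun e : Edge n d => ¬ e.1 ⊆ T) :
      edgeLaw n d p T e = bern p := if_neg (Finset.mem_filter.1 he).2
  refine measureReal_sum_ge_sqrt_add_le_exp_neg (iIndepFun_condLaw hp T fun e b =>
      (p - if b then 1 else 0) * cE e T) (fun e => Measurable.of_discrete) ?_ ?_ ?_
    (by nlinarith) hL
  · intro e he H
    have hpb : |p - if H e then 1 else 0| ≤ 1 := by
      rw [abs_le]; split_ifs <;> constructor <;> linarith [hp.1, hp.2]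
    rw [abs_mul, abs_of_nonneg (cE_nonneg _ _)]
    exact (mul_le_of_le_one_left (cE_nonneg _ _) hpb).trans
      (cE_le_of_not_subset (by omega) e.2 (Finset.mem_filter.1 he).2)
  · intro e he
    rw [integral_condLaw_apply hp T e (fun b => (p - if b then 1 else 0) * cE e T), hbern e he,
      integral_bern hp]
    simp only [if_true, Bool.false_eq_true, if_false]
    ring
  · have hfilter : (univ : Finset (Finset (Fin n))).filter (fun e => e.card = d ∧ ¬ e ⊆ T) =
        (univ.powersetCard d).filter (fun e => ¬ e ⊆ T) := by
      ext e
      simp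
    rw [hfilter, ← sum_edge_filter (fun e => ¬ e ⊆ T) (fun e => cE e T ^ 2), Finset.mul_sum]
    refine le_of_eq (Finset.sum_congr rfl fun e he => ?_)
    rw [integral_condLaw_apply hp T e (fun b => ((p - if b then 1 else 0) * cE e T) ^ 2),
        hbern e he, integral_bern hp]
    simp only [if_true, Bool.false_eq_true, if_false]
    ring

end HPC

theorem quadratic_statistic_lower_bound_general (n d : ℕ) (hd : 3 ≤ d)
    (p : ℝ) (hp : p ∈ Set.Icc (0 : ℝ) 1)
    (δ : ℝ) (hδ0 : 0 < δ) (hδ1 : δ < 1)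
    (T : Finset (Fin n)) (k₀ : ℕ) (hT : T.card = k₀) (hk₀ : 1 ≤ k₀) :
    ENNReal.ofReal (1 - δ / 2) ≤
      condLaw n d p T
        {H |
          (1 - p) * ((k₀ : ℝ) - 1) * ((k₀ - 2).choose (d - 2) : ℝ)
              - (k₀ : ℝ)⁻¹ *
                (Real.sqrt (2 *
                      (p * (1 - p) *
                        ∑ e ∈ (univ : Finset (Finset (Fin n))).filter
                            (fun e => e.card = d ∧ ¬ e ⊆ T), cE e T ^ 2) *
                      Real.log (4 / δ))
                  + 2 / 3 * (((d : ℝ) - 1) * ((d : ℝ) - 2)) * Real.log (4 / δ))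
            ≤ uInd T ⬝ᵥ (centered n d p H).mulVec (uInd T)} := by
  subst hT
  have := isProbabilityMeasure_condLaw (d := d) hp T
  have htail := measureReal_condLaw_fluctuation_ge_le hd hp T
    (log_pos ((one_lt_div hδ0).2 (by linarith)) : 0 < log (4 / δ))
  rw [exp_neg, exp_log (by positivity), inv_div] at htail
  set t := √(2 * (p * (1 - p) * ∑ e ∈ (univ : Finset (Finset (Fin n))).filter
      (fun e => e.card = d ∧ ¬ e ⊆ T), cE e T ^ 2) * log (4 / δ)) +
    2 / 3 * (((d : ℝ) - 1) * ((d : ℝ) - 2)) * log (4 / δ)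
  calc ENNReal.ofReal (1 - δ / 2)
      ≤ ENNReal.ofReal ((condLaw n d p T).real {H | t ≤ fluctuation n d p T H}ᶜ) := by
        rw [probReal_compl_eq_one_sub (Set.to_countable _).measurableSet]
        exact ENNReal.ofReal_le_ofReal (by linarith)
    _ = condLaw n d p T {H | t ≤ fluctuation n d p T H}ᶜ := ofReal_measureReal
    _ ≤ _ := measure_mono_ae <| by
        filter_upwards [ae_condLaw_eq_true_of_subset hp T] with H hH hlt
        change _ - _ * t ≤ _
        rw [dotProduct_centered_mulVec_uInd_of_planted (by omega) p H hk₀ hH]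
        have hlt' : fluctuation n d p T H < t := not_le.1 hlt
        gcongr

/-- **Lower tail of the quadratic statistic.** Under `P_T`, with probability at least
`1 − δ/2`, the statistic `q = ⟨u_T, M u_T⟩` is at least the signal term minus the
Bernstein fluctuation term. -/
theorem quadratic_statistic_lower_bound (n d : ℕ) (hd : 3 ≤ d) (hn : d ≤ n)
    (p : ℝ) (hp : p ∈ Set.Icc (0 : ℝ) 1)
    (δ : ℝ) (hδ0 : 0 < δ) (hδ1 : δ < 1)
    (T : Finset (Fin n)) (k₀ : ℕ) (hT : T.card = k₀) (hk₀ : 1 ≤ k₀) :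
    ENNReal.ofReal (1 - δ / 2) ≤
      condLaw n d p T
        {H |
          (1 - p) * ((k₀ : ℝ) - 1) * ((k₀ - 2).choose (d - 2) : ℝ)
              - (k₀ : ℝ)⁻¹ *
                (Real.sqrt (2 *
                      (p * (1 - p) *
                        ∑ e ∈ (univ : Finset (Finset (Fin n))).filter
                            (fun e => e.card = d ∧ ¬ e ⊆ T), cE e T ^ 2) *
                      Real.log (4 / δ))
                  + 2 / 3 * (((d : ℝ) - 1) * ((d : ℝ) - 2)) * Real.log (4 / δ))
            ≤ uInd T ⬝ᵥ (centered n d p H).mulVec (uInd T)} :=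
  quadratic_statistic_lower_bound_general n d hd p hp δ hδ0 hδ1 T k₀ hT hk₀
end

section
/- Let M and M^{(−m)} be symmetric n×n real matrices, B := M − M^{(−m)}, λ the largest eigenvalue of M with unit eigenvector u, and suppose the largest eigenvalue of M^{(−m)} has multiplicity one with corresponding unit eigenvector u^{(−m)} satisfying ⟨u, u^{(−m)}⟩ ≥ 0, and that δ := min_{i ≥ 2} |λ_i(M^{(−m)}) − λ| > 0. If η := √2·‖B‖/δ < 1, then ‖B u‖₂ ≤ ‖B u^{(−m)}‖₂ / (1 − η). -/
open MeasureTheory Filter Finset Matrix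
open scoped ENNReal

open HPC MeasureTheory Filter Finset Matrix
open scoped ENNReal Topology

/-!
Expand `u` in the orthonormal eigenbasis `(U_i)` of `M^{(−m)}`, with coefficients `c_i`.
Since `Bu = (λ − M^{(−m)}) u`, the coefficients of `Bu` are `(λ − λ_i) c_i`, so
`‖Bu‖² ≥ δ² (1 − c_0²)`. As the top eigenvalue is simple, `u^{(−m)} = ±U_0`, and the sign
condition gives `⟨u, u^{(−m)}⟩ = |c_0|`, so `‖u − u^{(−m)}‖² = 2 − 2|c_0| ≤ 2 (1 − c_0²)`.
Together: `δ ‖u − u^{(−m)}‖ ≤ √2 ‖Bu‖` (a Davis–Kahan `sin θ` bound), and the triangle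
inequality `‖Bu‖ ≤ ‖Bu^{(−m)}‖ + ‖B‖ ‖u − u^{(−m)}‖ ≤ ‖Bu^{(−m)}‖ + η ‖Bu‖` concludes.
-/

namespace HPC

section Norm2

variable {n : ℕ}

theorem norm2_eq_norm_toLp (v : Fin n → ℝ) : norm2 v = ‖WithLp.toLp 2 v‖ := by
  simp [norm2, EuclideanSpace.norm_eq, sq_abs]

theorem norm2_nonneg (v : Fin n → ℝ) : 0 ≤ norm2 v :=
  Real.sqrt_nonneg _

theorem norm2_sq (v : Fin n → ℝ) : norm2 v ^ 2 = v ⬝ᵥ v := by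
  rw [norm2, Real.sq_sqrt (by positivity)]
  simp [dotProduct, sq]

theorem norm2_add_le (v w : Fin n → ℝ) : norm2 (v + w) ≤ norm2 v + norm2 w := by
  simpa only [norm2_eq_norm_toLp, WithLp.toLp_add] using norm_add_le _ _

theorem dotProduct_le_norm2_mul_norm2 (v w : Fin n → ℝ) : v ⬝ᵥ w ≤ norm2 v * norm2 w := by
  simpa only [norm2_eq_norm_toLp, EuclideanSpace.inner_toLp_toLp, star_trivial,
    dotProduct_comm w] using real_inner_le_norm (WithLp.toLp 2 v) (WithLp.toLp 2 w)

theorem specNorm_nonneg (B : Matrix (Fin n) (Fin n) ℝ) : 0 ≤ specNorm B :=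
  norm_nonneg _

theorem norm2_mulVec_le (B : Matrix (Fin n) (Fin n) ℝ) (v : Fin n → ℝ) :
    norm2 (B *ᵥ v) ≤ specNorm B * norm2 v := by
  simpa only [norm2_eq_norm_toLp, specNorm, LinearMap.coe_toContinuousLinearMap',
    Matrix.toLpLin_toLp, Matrix.toLin'_apply] using
    (LinearMap.toContinuousLinearMap (Matrix.toEuclideanLin B)).le_opNorm (WithLp.toLp 2 v)

theorem norm2_sub_sq_le {u v : Fin n → ℝ} (hu : norm2 u = 1) (hv : norm2 v = 1)
    (huv : 0 ≤ u ⬝ᵥ v) : norm2 (u - v) ^ 2 ≤ 2 * (1 - (u ⬝ᵥ v) ^ 2) := by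
  have hle : u ⬝ᵥ v ≤ 1 := by simpa [hu, hv] using dotProduct_le_norm2_mul_norm2 u v
  have hexp : norm2 (u - v) ^ 2 = 2 - 2 * (u ⬝ᵥ v) := by
    rw [norm2_sq, sub_dotProduct, dotProduct_sub, dotProduct_sub, dotProduct_comm v u,
      ← norm2_sq, ← norm2_sq, hu, hv]
    ring
  nlinarith

end Norm2

theorem minOffTop_le {n : ℕ} [NeZero n] (hn : 2 ≤ n) (lam : Fin n → ℝ) (x : ℝ) {i : Fin n}
    (hi : i ≠ 0) : minOffTop hn lam x ≤ |lam i - x| :=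
  Finset.inf'_le _ (by simp [hi])

section Spectral

variable {ι : Type*} [Fintype ι]

theorem _root_.Matrix.IsSymm.dotProduct_mulVec_comm {A : Matrix ι ι ℝ} (hA : A.IsSymm)
    (v w : ι → ℝ) :
    v ⬝ᵥ (A *ᵥ w) = (A *ᵥ v) ⬝ᵥ w := by
  rw [dotProduct_mulVec, ← mulVec_transpose, hA.eq]

theorem dotProduct_eq_zero_of_eigenvalues_ne {A : Matrix ι ι ℝ} (hA : A.IsSymm)
    {v w : ι → ℝ} {μ ν : ℝ} (hv : A *ᵥ v = μ • v) (hw : A *ᵥ w = ν • w) (hμν : μ ≠ ν) :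
    v ⬝ᵥ w = 0 := by
  have h := hA.dotProduct_mulVec_comm v w
  rw [hv, hw, dotProduct_smul, smul_dotProduct, smul_eq_mul, smul_eq_mul] at h
  exact (mul_eq_zero.mp (by linear_combination h : (ν - μ) * (v ⬝ᵥ w) = 0)).resolve_left
    (sub_ne_zero.mpr hμν.symm)

variable [DecidableEq ι]

theorem sum_dotProduct_mul_dotProduct_of_orthonormal {U : ι → ι → ℝ}
    (hU : ∀ i j, U i ⬝ᵥ U j = if i = j then 1 else 0) (v w : ι → ℝ) :
    ∑ i, (U i ⬝ᵥ v) * (U i ⬝ᵥ w) = v ⬝ᵥ w := by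
  have hQ : Matrix.of U * (Matrix.of U)ᵀ = 1 := by
    ext i j
    simpa [Matrix.mul_apply, Matrix.one_apply, dotProduct] using hU i j
  have hQ' : (Matrix.of U)ᵀ * Matrix.of U = 1 := mul_eq_one_comm.mp hQ
  calc ∑ i, (U i ⬝ᵥ v) * (U i ⬝ᵥ w) = (Matrix.of U *ᵥ v) ⬝ᵥ (Matrix.of U *ᵥ w) := rfl
    _ = v ⬝ᵥ w := by
      rw [dotProduct_mulVec, ← mulVec_transpose, mulVec_mulVec, hQ', one_mulVec]

theorem one_sub_dotProduct_sq_eq_sum_erase {U : ι → ι → ℝ}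
    (hU : ∀ i j, U i ⬝ᵥ U j = if i = j then 1 else 0) {i₀ : ι} {u x : ι → ℝ}
    (hu : u ⬝ᵥ u = 1) (hx : x ⬝ᵥ x = 1) (hxU : ∀ i ≠ i₀, U i ⬝ᵥ x = 0) :
    1 - (u ⬝ᵥ x) ^ 2 = ∑ i ∈ univ.erase i₀, (U i ⬝ᵥ u) ^ 2 := by
  have hsum_erase : ∀ f : ι → ℝ, ∑ i, (U i ⬝ᵥ f) * (U i ⬝ᵥ x) = (U i₀ ⬝ᵥ f) * (U i₀ ⬝ᵥ x) :=
    fun f => Finset.sum_eq_single i₀ (fun i _ hi => by rw [hxU i hi, mul_zero]) (by simp)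
  have hx₀ : (U i₀ ⬝ᵥ x) ^ 2 = 1 := by
    rw [sq, ← hsum_erase, sum_dotProduct_mul_dotProduct_of_orthonormal hU, hx]
  have hux : u ⬝ᵥ x = (U i₀ ⬝ᵥ u) * (U i₀ ⬝ᵥ x) := by
    rw [← hsum_erase, sum_dotProduct_mul_dotProduct_of_orthonormal hU]
  have hu_sum : ∑ i, (U i ⬝ᵥ u) ^ 2 = 1 := by
    simpa only [sq] using (sum_dotProduct_mul_dotProduct_of_orthonormal hU u u).trans hu
  rw [hux, mul_pow, hx₀, mul_one, ← hu_sum, ← Finset.add_sum_erase _ _ (mem_univ i₀)]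
  ring

theorem gap_sq_mul_one_sub_dotProduct_sq_le {A : Matrix ι ι ℝ} (hA : A.IsSymm)
    {U : ι → ι → ℝ} {μ : ι → ℝ} (hU : ∀ i j, U i ⬝ᵥ U j = if i = j then 1 else 0)
    (hUeig : ∀ i, A *ᵥ U i = μ i • U i) {i₀ : ι} (hsimple : ∀ i ≠ i₀, μ i ≠ μ i₀)
    {x : ι → ℝ} (hx : x ⬝ᵥ x = 1) (hxeig : A *ᵥ x = μ i₀ • x)
    {u : ι → ℝ} (hu : u ⬝ᵥ u = 1) {t δ : ℝ} (hδ : 0 ≤ δ) (hgap : ∀ i ≠ i₀, δ ≤ |μ i - t|) :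
    δ ^ 2 * (1 - (u ⬝ᵥ x) ^ 2) ≤ (t • u - A *ᵥ u) ⬝ᵥ (t • u - A *ᵥ u) := by
  have hcoeff : ∀ i, U i ⬝ᵥ (t • u - A *ᵥ u) = (t - μ i) * (U i ⬝ᵥ u) := fun i => by
    rw [dotProduct_sub, hA.dotProduct_mulVec_comm, hUeig, dotProduct_smul, smul_dotProduct,
      smul_eq_mul, smul_eq_mul, sub_mul]
  have hxU : ∀ i ≠ i₀, U i ⬝ᵥ x = 0 := fun i hi =>
    dotProduct_eq_zero_of_eigenvalues_ne hA (hUeig i) hxeig (hsimple i hi)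
  rw [one_sub_dotProduct_sq_eq_sum_erase hU hu hx hxU, Finset.mul_sum,
    ← sum_dotProduct_mul_dotProduct_of_orthonormal hU]
  calc ∑ i ∈ univ.erase i₀, δ ^ 2 * (U i ⬝ᵥ u) ^ 2
      ≤ ∑ i ∈ univ.erase i₀, ((t - μ i) * (U i ⬝ᵥ u)) ^ 2 := by
        refine Finset.sum_le_sum fun i hi => ?_
        have hδi : δ ^ 2 ≤ (t - μ i) ^ 2 := by
          rw [← sq_abs (t - μ i), abs_sub_comm]
          exact pow_le_pow_left₀ hδ (hgap i (ne_of_mem_erase hi)) 2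
        rw [mul_pow]
        exact mul_le_mul_of_nonneg_right hδi (sq_nonneg _)
    _ ≤ ∑ i, ((t - μ i) * (U i ⬝ᵥ u)) ^ 2 :=
        Finset.sum_le_sum_of_subset_of_nonneg (erase_subset _ _) fun i _ _ => sq_nonneg _
    _ = _ := by simp only [hcoeff, sq]

end Spectral

theorem gap_mul_norm2_sub_le {n : ℕ} {A : Matrix (Fin n) (Fin n) ℝ} (hA : A.IsSymm)
    {U : Fin n → Fin n → ℝ} {μ : Fin n → ℝ} (hU : ∀ i j, U i ⬝ᵥ U j = if i = j then 1 else 0)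
    (hUeig : ∀ i, A *ᵥ U i = μ i • U i) {i₀ : Fin n} (hsimple : ∀ i ≠ i₀, μ i ≠ μ i₀)
    {x : Fin n → ℝ} (hx : norm2 x = 1) (hxeig : A *ᵥ x = μ i₀ • x)
    {u : Fin n → ℝ} (hu : norm2 u = 1) (hux : 0 ≤ u ⬝ᵥ x) {t δ : ℝ} (hδ : 0 ≤ δ)
    (hgap : ∀ i ≠ i₀, δ ≤ |μ i - t|) :
    δ * norm2 (u - x) ≤ √2 * norm2 (t • u - A *ᵥ u) := by
  have hunit : ∀ v : Fin n → ℝ, norm2 v = 1 → v ⬝ᵥ v = 1 := fun v hv => by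
    rw [← norm2_sq, hv, one_pow]
  refine (pow_le_pow_iff_left₀ (mul_nonneg hδ (norm2_nonneg _))
    (mul_nonneg (Real.sqrt_nonneg _) (norm2_nonneg _)) two_ne_zero).1 ?_
  calc (δ * norm2 (u - x)) ^ 2 = δ ^ 2 * norm2 (u - x) ^ 2 := mul_pow _ _ _
    _ ≤ δ ^ 2 * (2 * (1 - (u ⬝ᵥ x) ^ 2)) := by gcongr; exact norm2_sub_sq_le hu hx hux
    _ = 2 * (δ ^ 2 * (1 - (u ⬝ᵥ x) ^ 2)) := by ring
    _ ≤ 2 * norm2 (t • u - A *ᵥ u) ^ 2 := by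
        rw [norm2_sq]
        gcongr
        exact gap_sq_mul_one_sub_dotProduct_sq_le hA hU hUeig hsimple (hunit x hx) hxeig
          (hunit u hu) hδ hgap
    _ = (√2 * norm2 (t • u - A *ᵥ u)) ^ 2 := by rw [mul_pow, Real.sq_sqrt zero_le_two]

end HPC

theorem loo_perturbation_transfer_general (n : ℕ) [NeZero n] (hn : 2 ≤ n)
    (M Mm : Matrix (Fin n) (Fin n) ℝ) (hMm : Mm.IsSymm)
    (lam : ℝ) (u : Fin n → ℝ) (hu : IsTopEigenpair M lam u)
    (lamm : Fin n → ℝ) (Um : Fin n → Fin n → ℝ) (hdec : IsEigenDecomp Mm lamm Um)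
    (hmult : ∀ i : Fin n, i ≠ 0 → lamm i < lamm 0)
    (um : Fin n → ℝ) (hum_norm : norm2 um = 1)
    (hum_eig : Mm.mulVec um = lamm 0 • um)
    (hsign : 0 ≤ u ⬝ᵥ um)
    (hδ : 0 < minOffTop hn lamm lam)
    (hη : Real.sqrt 2 * specNorm (M - Mm) / minOffTop hn lamm lam < 1) :
    norm2 ((M - Mm).mulVec u)
      ≤ norm2 ((M - Mm).mulVec um) /
          (1 - Real.sqrt 2 * specNorm (M - Mm) / minOffTop hn lamm lam) := by
  obtain ⟨hu_norm, hu_eig, -⟩ := hu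
  obtain ⟨hU, hUeig, -⟩ := hdec
  set δ := minOffTop hn lamm lam
  set B := M - Mm
  have hBu : B *ᵥ u = lam • u - Mm *ᵥ u := by rw [sub_mulVec, hu_eig]
  have hclose : norm2 (u - um) ≤ √2 * norm2 (B *ᵥ u) / δ := by
    rw [le_div_iff₀ hδ, mul_comm, hBu]
    exact gap_mul_norm2_sub_le hMm hU hUeig (fun i hi => (hmult i hi).ne) hum_norm hum_eig
      hu_norm hsign hδ.le fun i hi => minOffTop_le hn lamm lam hi
  have htransfer : norm2 (B *ᵥ u) ≤ norm2 (B *ᵥ um) + √2 * specNorm B / δ * norm2 (B *ᵥ u) :=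
    calc norm2 (B *ᵥ u) = norm2 (B *ᵥ um + B *ᵥ (u - um)) := by
          rw [← mulVec_add, add_sub_cancel]
      _ ≤ norm2 (B *ᵥ um) + specNorm B * norm2 (u - um) :=
        (norm2_add_le _ _).trans (add_le_add_right (norm2_mulVec_le _ _) _)
      _ ≤ norm2 (B *ᵥ um) + specNorm B * (√2 * norm2 (B *ᵥ u) / δ) := by
        gcongr; exact specNorm_nonneg B
      _ = norm2 (B *ᵥ um) + √2 * specNorm B / δ * norm2 (B *ᵥ u) := by ring
  rw [le_div_iff₀ (sub_pos.mpr hη)]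
  linarith

/-- **Leave-one-out perturbation transfer.** If `η = √2‖B‖/δ < 1`, then
`‖Bu‖₂ ≤ ‖Bu^{(−m)}‖₂ / (1 − η)`. -/
theorem loo_perturbation_transfer (n : ℕ) [NeZero n] (hn : 2 ≤ n)
    (M Mm : Matrix (Fin n) (Fin n) ℝ) (hM : M.IsSymm) (hMm : Mm.IsSymm)
    (lam : ℝ) (u : Fin n → ℝ) (hu : IsTopEigenpair M lam u)
    (lamm : Fin n → ℝ) (Um : Fin n → Fin n → ℝ) (hdec : IsEigenDecomp Mm lamm Um)
    (hmult : ∀ i : Fin n, i ≠ 0 → lamm i < lamm 0)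
    (um : Fin n → ℝ) (hum_norm : norm2 um = 1)
    (hum_eig : Mm.mulVec um = lamm 0 • um)
    (hsign : 0 ≤ u ⬝ᵥ um)
    (hδ : 0 < minOffTop hn lamm lam)
    (hη : Real.sqrt 2 * specNorm (M - Mm) / minOffTop hn lamm lam < 1) :
    norm2 ((M - Mm).mulVec u)
      ≤ norm2 ((M - Mm).mulVec um) /
          (1 - Real.sqrt 2 * specNorm (M - Mm) / minOffTop hn lamm lam) :=
  loo_perturbation_transfer_general n hn M Mm hMm lam u hu lamm Um hdec hmult um hum_norm hum_eig
    hsign hδ hη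
end
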